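/- arXiv:1704.01866 — 6 statements merged into one kernel-verified Lean document; each statement's English description precedes it below -/
import Mathlib

section
/- For any intuitionistic Kripke model M = ⟨W,R,V⟩, any team t ⊆ W, and any standard formula φ (a formula containing no inquisitive disjunction ⩾), we have: M,t ⊨ φ if and only if M,w ⊨ φ for every world w ∈ t. That is, every standard formula is truth-conditional. -/
/-- Formulas of the language L: atoms, ⊥, ∧, ∨, →, and inquisitive disjunction ⩾. -/
inductive Formula (P : Type) : Type
  | atom : P → Formula P
  | bot  : Formula P
  | and  : Formula P → Formula P → Formula P
  | or   : Formula P → Formula P → Formula P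
  | impl : Formula P → Formula P → Formula P
  | iorr : Formula P → Formula P → Formula P

namespace Formula

/-- Negation ¬φ := φ → ⊥. -/
def neg {P : Type} (φ : Formula P) : Formula P := Formula.impl φ Formula.bot

/-- Polar question ?φ := φ ⩾ ¬φ. -/
def question {P : Type} (φ : Formula P) : Formula P := Formula.iorr φ φ.neg

/-- A standard formula contains no occurrence of inquisitive disjunction ⩾. -/
def standard {P : Type} : Formula P → Prop
  | atom _ => True
  | bot => True
  | and φ ψ => φ.standard ∧ ψ.standard
  | or φ ψ => φ.standard ∧ ψ.standard
  | impl φ ψ => φ.standard ∧ ψ.standard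
  | iorr _ _ => False

end Formula

/-- An intuitionistic Kripke model: a partially ordered set of worlds with a
persistent valuation. -/
structure KripkeModel (P : Type) where
  W : Type
  R : W → W → Prop
  refl : ∀ w, R w w
  antisymm : ∀ w v, R w v → R v w → w = v
  trans : ∀ w v u, R w v → R v u → R w u
  V : W → P → Prop
  persistent : ∀ w v p, R w v → V w p → V v p

/-- R[t], the up-set generated by a team t. -/
def KripkeModel.upset {P : Type} (M : KripkeModel P) (t : Set M.W) : Set M.W :=
  {v | ∃ w ∈ t, M.R w v}

/-- The support relation M,t ⊨ φ between teams and formulas. -/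
def support {P : Type} (M : KripkeModel P) : Formula P → Set M.W → Prop
  | .atom p, t => ∀ w ∈ t, M.V w p
  | .bot, t => t = ∅
  | .and φ ψ, t => support M φ t ∧ support M ψ t
  | .or φ ψ, t => ∃ t₁ t₂, t = t₁ ∪ t₂ ∧ support M φ t₁ ∧ support M ψ t₂
  | .impl φ ψ, t => ∀ t', t' ⊆ M.upset t → support M φ t' → support M ψ t'
  | .iorr φ ψ, t => support M φ t ∨ support M ψ t

/-- Truth at a world: M,w ⊨ φ iff M,{w} ⊨ φ. -/
def truth {P : Type} (M : KripkeModel P) (w : M.W) (φ : Formula P) : Prop :=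
  support M φ {w}

/-- A formula is truth-conditional if support at a team amounts to truth at each world. -/
def truthConditional {P : Type} (φ : Formula P) : Prop :=
  ∀ (M : KripkeModel P) (t : Set M.W), support M φ t ↔ ∀ w ∈ t, truth M w φ

/-- The partial truth-value function: `tvalIs M w φ b` says T(w,φ) is defined with value b
(b = true for value 1, i.e. M,w ⊨ φ; b = false for value 0, i.e. M,w ⊨ ¬φ). -/
def tvalIs {P : Type} (M : KripkeModel P) (w : M.W) (φ : Formula P) : Bool → Prop
  | true => truth M w φ
  | false => truth M w φ.neg

/-!
Support is downward closed, which gives one direction. Conversely, for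
a standard formula support at a team is recovered from truth at its worlds by induction: a
disjunction is supported by splitting the team according to which disjunct is true at each world,
and an implication only needs to be checked on singletons, since its consequent is again
truth-conditional.
-/

namespace KripkeModel

variable {P : Type} (M : KripkeModel P)

theorem upset_mono {t t' : Set M.W} (h : t' ⊆ t) : M.upset t' ⊆ M.upset t := by
  rintro v ⟨w, hw, hR⟩
  exact ⟨w, h hw, hR⟩

theorem singleton_subset_upset_singleton {w v : M.W} (h : M.R w v) :
    ({v} : Set M.W) ⊆ M.upset {w} := by
  rintro _ rfl
  exact ⟨w, rfl, h⟩

end KripkeModel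

section Support

variable {P : Type} (M : KripkeModel P)

theorem support_of_subset (φ : Formula P) {t t' : Set M.W} (h : t' ⊆ t)
    (hs : support M φ t) : support M φ t' := by
  induction φ generalizing t t' with
  | atom p => exact fun w hw => hs w (h hw)
  | bot => exact Set.subset_eq_empty h hs
  | and φ ψ ihφ ihψ => exact ⟨ihφ h hs.1, ihψ h hs.2⟩
  | or φ ψ ihφ ihψ =>
    obtain ⟨t₁, t₂, rfl, h₁, h₂⟩ := hs
    refine ⟨t' ∩ t₁, t' ∩ t₂, ?_, ihφ Set.inter_subset_right h₁, ihψ Set.inter_subset_right h₂⟩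
    rw [← Set.inter_union_distrib_left, Set.inter_eq_left.mpr h]
  | impl φ ψ _ _ => exact fun t'' ht'' => hs t'' (ht''.trans (M.upset_mono h))
  | iorr φ ψ ihφ ihψ => exact hs.imp (ihφ h) (ihψ h)

theorem truth_of_support {φ : Formula P} {t : Set M.W} (hs : support M φ t) {w : M.W}
    (hw : w ∈ t) : truth M w φ :=
  support_of_subset M φ (Set.singleton_subset_iff.mpr hw) hs

theorem truth_or_truth_of_truth_or {φ ψ : Formula P} {w : M.W} (h : truth M w (.or φ ψ)) :
    truth M w φ ∨ truth M w ψ := by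
  obtain ⟨t₁, t₂, he, h₁, h₂⟩ := h
  have hw : w ∈ t₁ ∪ t₂ := he ▸ rfl
  exact hw.imp (truth_of_support M h₁) (truth_of_support M h₂)

theorem support_of_forall_truth {φ : Formula P} (hφ : φ.standard) {t : Set M.W}
    (h : ∀ w ∈ t, truth M w φ) : support M φ t := by
  induction φ generalizing t with
  | atom p => exact fun w hw => h w hw w rfl
  | bot => exact Set.eq_empty_of_forall_notMem fun w hw => Set.singleton_ne_empty w (h w hw)
  | and φ ψ ihφ ihψ =>
    exact ⟨ihφ hφ.1 fun w hw => (h w hw).1, ihψ hφ.2 fun w hw => (h w hw).2⟩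
  | or φ ψ ihφ ihψ =>
    refine ⟨{w ∈ t | truth M w φ}, {w ∈ t | truth M w ψ}, ?_,
      ihφ hφ.1 fun w hw => hw.2, ihψ hφ.2 fun w hw => hw.2⟩
    ext w
    constructor
    · exact fun hw => (truth_or_truth_of_truth_or M (h w hw)).imp (⟨hw, ·⟩) (⟨hw, ·⟩)
    · rintro (⟨hw, _⟩ | ⟨hw, _⟩) <;> exact hw
  | impl φ ψ _ ihψ =>
    refine fun t' ht' hφt' => ihψ hφ.2 fun v hv => ?_
    obtain ⟨w, hw, hR⟩ := ht' hv
    exact h w hw {v} (M.singleton_subset_upset_singleton hR) (truth_of_support M hφt' hv)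
  | iorr => exact hφ.elim

end Support

/-- every standard formula is truth-conditional. -/
theorem standard_formulas_truthConditional {P : Type} (M : KripkeModel P)
    (t : Set M.W) (φ : Formula P) (hφ : φ.standard) :
    support M φ t ↔ ∀ w ∈ t, truth M w φ :=
  ⟨fun hs _ hw => truth_of_support M hs hw, support_of_forall_truth M hφ⟩
end

section
/- Support conditions for polar questions: for any intuitionistic Kripke model M, team t, and standard formula α: M,t ⊨ ?α if and only if for all w,w' ∈ t, the truth-values T(w,α) and T(w',α) are both defined and equal. -/
/-! Standard formulas are truth-conditional, so `M,t ⊨ α` and `M,t ⊨ ¬α` say that every world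
of `t` has truth-value 1, resp. 0. Since no world has both values, `t` supports `?α` iff all its
worlds share one defined truth-value, which is the pairwise condition. -/

lemma exists_forall_mem_iff_pairwise_exists {ι β : Type*} [Nonempty β] {s : Set ι}
    {Q : ι → β → Prop} (hQ : ∀ i b b', Q i b → Q i b' → b = b') :
    (∃ b, ∀ i ∈ s, Q i b) ↔ ∀ i ∈ s, ∀ j ∈ s, ∃ b, Q i b ∧ Q j b := by
  constructor
  · rintro ⟨b, hb⟩ i hi j hj
    exact ⟨b, hb i hi, hb j hj⟩
  · intro h
    rcases s.eq_empty_or_nonempty with rfl | ⟨i₀, hi₀⟩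
    · exact ⟨Classical.arbitrary β, fun _ hi => hi.elim⟩
    obtain ⟨b₀, hb₀, -⟩ := h i₀ hi₀ i₀ hi₀
    refine ⟨b₀, fun j hj => ?_⟩
    obtain ⟨b, hi₀b, hjb⟩ := h i₀ hi₀ j hj
    rwa [hQ i₀ b₀ b hb₀ hi₀b]

section TruthConditional

variable {P : Type} {φ ψ : Formula P}

lemma truthConditional_atom (p : P) : truthConditional (Formula.atom p) := by
  intro M t
  simp [support, truth]

lemma truthConditional_bot : truthConditional (Formula.bot : Formula P) := by
  intro M t
  simp [support, truth, Set.eq_empty_iff_forall_notMem]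

lemma truthConditional.and (hφ : truthConditional φ) (hψ : truthConditional ψ) :
    truthConditional (φ.and ψ) := by
  intro M t
  show support M φ t ∧ support M ψ t ↔ ∀ w ∈ t, truth M w φ ∧ truth M w ψ
  rw [hφ M, hψ M, ← forall₂_and]

lemma truthConditional.truth_or_iff (hφ : truthConditional φ) (hψ : truthConditional ψ)
    {M : KripkeModel P} {w : M.W} :
    truth M w (φ.or ψ) ↔ truth M w φ ∨ truth M w ψ := by
  constructor
  · rintro ⟨t₁, t₂, hw, h₁, h₂⟩
    rcases (Set.ext_iff.1 hw w).1 rfl with hw₁ | hw₂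
    · exact Or.inl ((hφ M t₁).1 h₁ w hw₁)
    · exact Or.inr ((hψ M t₂).1 h₂ w hw₂)
  · rintro (h | h)
    · exact ⟨{w}, ∅, (Set.union_empty _).symm, h, (hψ M ∅).2 fun _ hv => hv.elim⟩
    · exact ⟨∅, {w}, (Set.empty_union _).symm, (hφ M ∅).2 fun _ hv => hv.elim, h⟩

lemma truthConditional.or (hφ : truthConditional φ) (hψ : truthConditional ψ) :
    truthConditional (φ.or ψ) := by
  intro M t
  simp only [hφ.truth_or_iff hψ]
  constructor
  · rintro ⟨t₁, t₂, rfl, h₁, h₂⟩ w (hw | hw)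
    · exact Or.inl ((hφ M t₁).1 h₁ w hw)
    · exact Or.inr ((hψ M t₂).1 h₂ w hw)
  · intro h
    refine ⟨{w ∈ t | truth M w φ}, {w ∈ t | truth M w ψ}, ?_,
      (hφ M _).2 fun _ hw => hw.2, (hψ M _).2 fun _ hw => hw.2⟩
    ext w
    simp only [Set.mem_union, Set.mem_ofPred_eq, ← and_or_left, iff_self_and]
    exact h w

lemma truthConditional.impl (hφ : truthConditional φ) (hψ : truthConditional ψ) :
    truthConditional (φ.impl ψ) := by
  intro M t
  constructor
  · intro h w hw t' ht'
    refine h t' fun v hv => ?_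
    obtain ⟨u, rfl, hwv⟩ := ht' hv
    exact ⟨u, hw, hwv⟩
  · intro h t' ht' hφt'
    refine (hψ M t').2 fun v hv => ?_
    obtain ⟨w, hw, hwv⟩ := ht' hv
    exact h w hw {v} (Set.singleton_subset_iff.2 ⟨w, rfl, hwv⟩)
      ((hφ M {v}).2 fun _ hu => hu ▸ (hφ M t').1 hφt' v hv)

lemma Formula.standard.truthConditional {α : Formula P} (hα : α.standard) :
    truthConditional α := by
  induction α with
  | atom p => exact truthConditional_atom p
  | bot => exact truthConditional_bot
  | and φ ψ ihφ ihψ => exact (ihφ hα.1).and (ihψ hα.2)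
  | or φ ψ ihφ ihψ => exact (ihφ hα.1).or (ihψ hα.2)
  | impl φ ψ ihφ ihψ => exact (ihφ hα.1).impl (ihψ hα.2)
  | iorr => exact hα.elim

end TruthConditional

lemma not_truth_neg_of_truth {P : Type} {M : KripkeModel P} {w : M.W} {φ : Formula P}
    (h : truth M w φ) : ¬ truth M w φ.neg := fun hneg =>
  Set.singleton_ne_empty w <| hneg {w}
    (Set.singleton_subset_iff.2 ⟨w, rfl, M.refl w⟩) h

lemma tvalIs_unique {P : Type} {M : KripkeModel P} {w : M.W} {φ : Formula P} {b b' : Bool}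
    (hb : tvalIs M w φ b) (hb' : tvalIs M w φ b') : b = b' := by
  cases b <;> cases b'
  · rfl
  · exact (not_truth_neg_of_truth hb' hb).elim
  · exact (not_truth_neg_of_truth hb hb').elim
  · rfl

lemma support_question_iff {P : Type} {α : Formula P} (hα : truthConditional α)
    (M : KripkeModel P) (t : Set M.W) :
    support M α.question t ↔ ∃ b, ∀ w ∈ t, tvalIs M w α b := by
  have hneg : truthConditional α.neg := hα.impl truthConditional_bot
  show support M α t ∨ support M α.neg t ↔ _
  rw [Bool.exists_bool]
  exact (or_congr (hα M t) (hneg M t)).trans or_comm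

/-- support conditions for polar questions: M,t ⊨ ?α iff for all
w, w' ∈ t the truth-values T(w,α) and T(w',α) are both defined and equal. -/
theorem polar_question_support {P : Type} (M : KripkeModel P) (t : Set M.W)
    (α : Formula P) (hα : α.standard) :
    support M α.question t ↔
      ∀ w ∈ t, ∀ w' ∈ t, ∃ b : Bool, tvalIs M w α b ∧ tvalIs M w' α b := by
  rw [support_question_iff hα.truthConditional]
  exact exists_forall_mem_iff_pairwise_exists fun _ _ _ => tvalIs_unique
end

section
/- Functional characterization of dependency: for any intuitionistic Kripke model M, team t, and atomic propositions p, q: M,t ⊨ ?p → ?q if and only if there exists a function f : {0,1} → {0,1} such that for every w ∈ R[t], if T(w,p) is defined then T(w,q) is defined and T(w,q) = f(T(w,p)). -/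
/-!
For an atom α, a team supports ?α exactly when T(·, α) is defined and constant on it.
Every subteam of R[t] supporting ?p lies in one of the two subteams where T(·, p) is 1
resp. 0, so t supports ?p → ?q iff T(·, q) is defined and constant on each of these two;
the two constants form f.
-/

namespace KripkeModel

variable {P : Type} (M : KripkeModel P)

lemma upset_singleton (w : M.W) : M.upset {w} = {v | M.R w v} := by
  ext v
  simp [upset]

end KripkeModel

section Atoms

variable {P : Type} (M : KripkeModel P)

lemma support_atom_neg_iff (p : P) (t : Set M.W) :
    support M (Formula.atom p).neg t ↔ ∀ v ∈ M.upset t, ¬ M.V v p := by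
  constructor
  · intro h v hv hVp
    have hempty : ({v} : Set M.W) = ∅ :=
      h {v} (Set.singleton_subset_iff.2 hv) fun x hx => hx ▸ hVp
    exact Set.singleton_ne_empty v hempty
  · intro h t' ht' hp
    exact Set.eq_empty_of_forall_notMem fun v hv => h v (ht' hv) (hp v hv)

lemma tvalIs_atom_true_iff (p : P) (w : M.W) :
    tvalIs M w (Formula.atom p) true ↔ M.V w p := by
  simp [tvalIs, truth, support]

lemma tvalIs_atom_false_iff (p : P) (w : M.W) :
    tvalIs M w (Formula.atom p) false ↔ ∀ v, M.R w v → ¬ M.V v p := by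
  simp only [tvalIs, truth, support_atom_neg_iff, KripkeModel.upset_singleton, Set.mem_ofPred_eq]

lemma support_atom_question_iff (p : P) (s : Set M.W) :
    support M (Formula.atom p).question s ↔ ∃ b : Bool, ∀ w ∈ s, tvalIs M w (Formula.atom p) b := by
  simp only [Formula.question, support, support_atom_neg_iff]
  constructor
  · rintro (hp | hnp)
    · exact ⟨true, fun w hw => (tvalIs_atom_true_iff M p w).2 (hp w hw)⟩
    · exact ⟨false, fun w hw => (tvalIs_atom_false_iff M p w).2
        fun v hwv => hnp v ⟨w, hw, hwv⟩⟩
  · rintro ⟨_ | _, hb⟩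
    · exact Or.inr fun v ⟨w, hw, hwv⟩ => (tvalIs_atom_false_iff M p w).1 (hb w hw) v hwv
    · exact Or.inl fun w hw => (tvalIs_atom_true_iff M p w).1 (hb w hw)

end Atoms

/-- functional characterization of dependency: M,t ⊨ ?p → ?q iff there
is f : {0,1} → {0,1} such that for every w ∈ R[t], if T(w,p) is defined then T(w,q)
is defined and T(w,q) = f(T(w,p)). -/
theorem dependency_functional_characterization {P : Type} (M : KripkeModel P)
    (t : Set M.W) (p q : P) :
    support M (Formula.impl (Formula.atom p).question (Formula.atom q).question) t ↔
      ∃ f : Bool → Bool, ∀ w ∈ M.upset t, ∀ b : Bool,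
        tvalIs M w (Formula.atom p) b → tvalIs M w (Formula.atom q) (f b) := by
  simp only [support, support_atom_question_iff]
  constructor
  · intro H
    have hconst : ∀ b : Bool, ∃ c : Bool,
        ∀ w ∈ {w ∈ M.upset t | tvalIs M w (Formula.atom p) b}, tvalIs M w (Formula.atom q) c :=
      fun b => H _ (fun w hw => hw.1) ⟨b, fun w hw => hw.2⟩
    choose f hf using hconst
    exact ⟨f, fun w hw b hb => hf b w ⟨hw, hb⟩⟩
  · rintro ⟨f, hf⟩ t' ht' ⟨b, hb⟩
    exact ⟨f b, fun w hw => hf w (ht' hw) b (hb w hw)⟩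
end

section
/- Disjunction property for ∨: for any formulas φ, ψ of L, if φ∨ψ is valid in InqI (supported by every team in every intuitionistic Kripke model), then φ is valid or ψ is valid. -/
/-!
If neither `φ` nor `ψ` is valid, take countermodels `M₁`, `M₂` and place their disjoint union
above a fresh root. The root's singleton team supports `φ ∨ ψ`, hence the root alone supports
`φ` or `ψ`. Support persists from a team to every team inside its up-set, so that disjunct is
supported by every team of the glued model, in particular by the copy of the countermodel team;
since each `Mᵢ` sits in the glued model as a generated submodel, support transfers back to `Mᵢ`.
-/

section Persistence

variable {P : Type} (M : KripkeModel P)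

lemma KripkeModel.subset_upset (t : Set M.W) : t ⊆ M.upset t :=
  fun w hw => ⟨w, hw, M.refl w⟩

lemma KripkeModel.upset_upset (t : Set M.W) : M.upset (M.upset t) = M.upset t := by
  refine Set.Subset.antisymm ?_ (M.subset_upset _)
  rintro u ⟨v, ⟨w, hw, hwv⟩, hvu⟩
  exact ⟨w, hw, M.trans w v u hwv hvu⟩

lemma KripkeModel.upset_mono_s13 {s t : Set M.W} (h : s ⊆ t) : M.upset s ⊆ M.upset t :=
  fun _ ⟨w, hw, hwv⟩ => ⟨w, h hw, hwv⟩

lemma KripkeModel.upset_union (t₁ t₂ : Set M.W) :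
    M.upset (t₁ ∪ t₂) = M.upset t₁ ∪ M.upset t₂ := by
  ext v
  simp only [KripkeModel.upset, Set.mem_union, Set.mem_ofPred_eq, or_and_right, exists_or]

lemma KripkeModel.upset_empty : M.upset ∅ = ∅ := by
  simp [KripkeModel.upset]

/-- Persistence and downward closure at once: support passes from `t` to any team
inside `R[t]`. -/
theorem support_of_subset_upset (χ : Formula P) :
    ∀ {s t : Set M.W}, support M χ t → s ⊆ M.upset t → support M χ s := by
  induction χ with
  | atom p =>
    rintro s t ht hs v hv
    obtain ⟨w, hw, hwv⟩ := hs hv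
    exact M.persistent w v p hwv (ht w hw)
  | bot =>
    rintro s t (rfl : t = ∅) hs
    exact Set.subset_eq_empty hs M.upset_empty
  | and α β ihα ihβ =>
    exact fun ht hs => ⟨ihα ht.1 hs, ihβ ht.2 hs⟩
  | or α β ihα ihβ =>
    rintro s t ⟨t₁, t₂, rfl, h₁, h₂⟩ hs
    refine ⟨s ∩ M.upset t₁, s ∩ M.upset t₂, ?_, ihα h₁ Set.inter_subset_right,
      ihβ h₂ Set.inter_subset_right⟩
    rw [← Set.inter_union_distrib_left, ← M.upset_union, Set.inter_eq_left.2 hs]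
  | impl α β =>
    intro s t ht hs s' hs' hα
    exact ht s' (hs'.trans (M.upset_upset t ▸ M.upset_mono_s13 hs)) hα
  | iorr α β ihα ihβ =>
    exact fun ht hs => ht.imp (ihα · hs) (ihβ · hs)

theorem support_of_root_mem {χ : Formula P} {r : M.W} (hr : ∀ w, M.R r w) {t : Set M.W}
    (hrt : r ∈ t) (ht : support M χ t) (s : Set M.W) : support M χ s :=
  support_of_subset_upset M χ ht fun w _ => ⟨r, hrt, hr w⟩

end Persistence

/-- `f` identifies `M` with an upward-closed part of `N` (a generated submodel). -/
structure KripkeModel.GeneratedEmbedding {P : Type} (M N : KripkeModel P) (f : M.W → N.W) :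
    Prop where
  rel_iff : ∀ w v, M.R w v ↔ N.R (f w) (f v)
  mem_range_of_rel : ∀ w v, N.R (f w) v → v ∈ Set.range f
  val_iff : ∀ w p, M.V w p ↔ N.V (f w) p

namespace KripkeModel.GeneratedEmbedding

variable {P : Type} {M N : KripkeModel P} {f : M.W → N.W} (hf : M.GeneratedEmbedding N f)
include hf

lemma injective : Function.Injective f := fun w v h =>
  M.antisymm w v ((hf.rel_iff w v).2 (h ▸ N.refl _)) ((hf.rel_iff v w).2 (h ▸ N.refl _))

lemma upset_image (t : Set M.W) : N.upset (f '' t) = f '' M.upset t := by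
  ext v
  constructor
  · rintro ⟨_, ⟨w, hw, rfl⟩, hwv⟩
    obtain ⟨u, rfl⟩ := hf.mem_range_of_rel w v hwv
    exact ⟨u, ⟨w, hw, (hf.rel_iff w u).2 hwv⟩, rfl⟩
  · rintro ⟨u, ⟨w, hw, hwu⟩, rfl⟩
    exact ⟨f w, ⟨w, hw, rfl⟩, (hf.rel_iff w u).1 hwu⟩

theorem support_image_iff (χ : Formula P) :
    ∀ t : Set M.W, support N χ (f '' t) ↔ support M χ t := by
  induction χ with
  | atom p =>
    intro t
    simp only [support, Set.forall_mem_image, hf.val_iff]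
  | bot =>
    intro t
    exact Set.image_eq_empty
  | and α β ihα ihβ =>
    intro t
    exact and_congr (ihα t) (ihβ t)
  | or α β ihα ihβ =>
    intro t
    constructor
    · rintro ⟨a, b, hab, ha, hb⟩
      have hrange : a ∪ b ⊆ Set.range f := hab ▸ Set.image_subset_range f t
      refine ⟨f ⁻¹' a, f ⁻¹' b, ?_, (ihα _).1 ?_, (ihβ _).1 ?_⟩
      · rw [← Set.preimage_union, ← hab, Set.preimage_image_eq _ hf.injective]
      · rwa [Set.image_preimage_eq_of_subset (Set.subset_union_left.trans hrange)]
      · rwa [Set.image_preimage_eq_of_subset (Set.subset_union_right.trans hrange)]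
    · rintro ⟨a, b, rfl, ha, hb⟩
      exact ⟨f '' a, f '' b, Set.image_union f a b, (ihα a).2 ha, (ihβ b).2 hb⟩
  | impl α β ihα ihβ =>
    intro t
    simp only [support, hf.upset_image]
    constructor
    · intro ht s hs hα
      exact (ihβ s).1 (ht _ (Set.image_mono hs) ((ihα s).2 hα))
    · intro ht s hs hα
      obtain ⟨s, hst, rfl⟩ := Set.subset_image_iff.1 hs
      exact (ihβ s).2 (ht s hst ((ihα s).1 hα))
  | iorr α β ihα ihβ =>
    intro t
    exact or_congr (ihα t) (ihβ t)

end KripkeModel.GeneratedEmbedding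

namespace KripkeModel

variable {P : Type} (M₁ M₂ : KripkeModel P)

def rootedSum : KripkeModel P where
  W := Option (M₁.W ⊕ M₂.W)
  R
    | none, _ => True
    | some (.inl w), some (.inl v) => M₁.R w v
    | some (.inr w), some (.inr v) => M₂.R w v
    | _, _ => False
  refl := by rintro (_ | w | w) <;> first | trivial | exact M₁.refl w | exact M₂.refl w
  antisymm := by
    rintro (_ | w | w) (_ | v | v) h₁ h₂ <;> first
      | rfl | exact h₁.elim | exact h₂.elim
      | rw [M₁.antisymm w v h₁ h₂] | rw [M₂.antisymm w v h₁ h₂]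
  trans := by
    rintro (_ | w | w) (_ | v | v) (_ | u | u) h₁ h₂ <;> first
      | trivial | exact h₁.elim | exact h₂.elim
      | exact M₁.trans w v u h₁ h₂ | exact M₂.trans w v u h₁ h₂
  V
    | none, _ => False
    | some (.inl w), p => M₁.V w p
    | some (.inr w), p => M₂.V w p
  persistent := by
    rintro (_ | w | w) (_ | v | v) p h₁ h₂ <;> first
      | exact h₁.elim | exact h₂.elim
      | exact M₁.persistent w v p h₁ h₂ | exact M₂.persistent w v p h₁ h₂

lemma generatedEmbedding_rootedSum_inl :
    M₁.GeneratedEmbedding (M₁.rootedSum M₂) (some ∘ Sum.inl) where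
  rel_iff _ _ := Iff.rfl
  mem_range_of_rel := by
    rintro w (_ | v | v) h
    exacts [h.elim, ⟨v, rfl⟩, h.elim]
  val_iff _ _ := Iff.rfl

lemma generatedEmbedding_rootedSum_inr :
    M₂.GeneratedEmbedding (M₁.rootedSum M₂) (some ∘ Sum.inr) where
  rel_iff _ _ := Iff.rfl
  mem_range_of_rel := by
    rintro w (_ | v | v) h
    exacts [h.elim, h.elim, ⟨v, rfl⟩]
  val_iff _ _ := Iff.rfl

end KripkeModel

/-- disjunction property for ∨: if φ ∨ ψ is valid then φ is valid
or ψ is valid. -/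
theorem disjunction_property_or {P : Type} (φ ψ : Formula P)
    (h : ∀ (M : KripkeModel P) (t : Set M.W), support M (Formula.or φ ψ) t) :
    (∀ (M : KripkeModel P) (t : Set M.W), support M φ t) ∨
    (∀ (M : KripkeModel P) (t : Set M.W), support M ψ t) := by
  by_contra! hfail
  obtain ⟨⟨M₁, t₁, hφ⟩, ⟨M₂, t₂, hψ⟩⟩ := hfail
  obtain ⟨a, b, hab, ha, hb⟩ := h (M₁.rootedSum M₂) {none}
  have hroot (w : (M₁.rootedSum M₂).W) : (M₁.rootedSum M₂).R none w := trivial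
  rcases (hab ▸ rfl : none ∈ a ∪ b) with hrt | hrt
  · exact hφ (((M₁.generatedEmbedding_rootedSum_inl M₂).support_image_iff φ t₁).1
      (support_of_root_mem _ hroot hrt ha _))
  · exact hψ (((M₁.generatedEmbedding_rootedSum_inr M₂).support_image_iff ψ t₂).1
      (support_of_root_mem _ hroot hrt hb _))
end

section
/- Split property for inquisitive disjunction: if Γ is a set of truth-conditional formulas of L and Γ ⊨ φ⩾ψ in InqI, then Γ ⊨ φ or Γ ⊨ ψ. -/
section

variable {P : Type}

theorem support_antitone {M : KripkeModel P} (φ : Formula P) : Antitone (support M φ) := by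
  induction φ with
  | atom p => exact fun t s hs hφ w hw => hφ w (hs hw)
  | bot => exact fun t s hs (hφ : s = ∅) => Set.subset_empty_iff.mp (hφ ▸ hs)
  | and φ ψ ihφ ihψ => exact fun t s hs hφψ => ⟨ihφ hs hφψ.1, ihψ hs hφψ.2⟩
  | or φ ψ ihφ ihψ =>
    rintro t s hs ⟨s₁, s₂, rfl, h₁, h₂⟩
    refine ⟨t ∩ s₁, t ∩ s₂, ?_, ihφ Set.inter_subset_right h₁, ihψ Set.inter_subset_right h₂⟩
    rw [← Set.inter_union_distrib_left, Set.inter_eq_left.mpr hs]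
  | impl φ ψ _ _ =>
    intro t s hs hφψ t' ht' hφ
    refine hφψ t' (fun v hv => ?_) hφ
    obtain ⟨w, hw, hwv⟩ := ht' hv
    exact ⟨w, hs hw, hwv⟩
  | iorr φ ψ ihφ ihψ => exact fun t s hs hφψ => hφψ.imp (ihφ hs) (ihψ hs)

theorem truthConditional.support_union {φ : Formula P} (hφ : truthConditional φ)
    {M : KripkeModel P} {s t : Set M.W} (hs : support M φ s) (ht : support M φ t) :
    support M φ (s ∪ t) := by
  rw [hφ] at hs ht ⊢
  rintro w (hw | hw)
  exacts [hs w hw, ht w hw]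

namespace KripkeModel

/-- An isomorphism onto a generated submodel, i.e. onto an upward closed set of worlds. -/
structure Embedding (M N : KripkeModel P) where
  toFun : M.W → N.W
  rel_iff : ∀ a b, N.R (toFun a) (toFun b) ↔ M.R a b
  exists_eq_of_rel : ∀ a v, N.R (toFun a) v → ∃ b, toFun b = v
  val_iff : ∀ a p, N.V (toFun a) p ↔ M.V a p

namespace Embedding

variable {M N : KripkeModel P} (e : Embedding M N)

theorem injective : Function.Injective e.toFun := fun a b hab =>
  M.antisymm a b ((e.rel_iff a b).mp (hab ▸ N.refl _)) ((e.rel_iff b a).mp (hab ▸ N.refl _))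

theorem upset_image (t : Set M.W) : N.upset (e.toFun '' t) = e.toFun '' M.upset t := by
  ext v
  constructor
  · rintro ⟨_, ⟨a, ha, rfl⟩, hav⟩
    obtain ⟨b, rfl⟩ := e.exists_eq_of_rel a v hav
    exact ⟨b, ⟨a, ha, (e.rel_iff a b).mp hav⟩, rfl⟩
  · rintro ⟨b, ⟨a, ha, hab⟩, rfl⟩
    exact ⟨e.toFun a, ⟨a, ha, rfl⟩, (e.rel_iff a b).mpr hab⟩

theorem image_preimage_of_subset_image {s : Set N.W} {t : Set M.W} (hs : s ⊆ e.toFun '' t) :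
    e.toFun '' (e.toFun ⁻¹' s) = s :=
  Set.image_preimage_eq_of_subset (hs.trans (Set.image_subset_range _ _))

theorem support_image (φ : Formula P) (t : Set M.W) :
    support N φ (e.toFun '' t) ↔ support M φ t := by
  induction φ generalizing t with
  | atom p =>
    simp only [support, Set.forall_mem_image, e.val_iff]
  | bot => exact Set.image_eq_empty
  | and φ ψ ihφ ihψ => exact and_congr (ihφ t) (ihψ t)
  | or φ ψ ihφ ihψ =>
    constructor
    · rintro ⟨s₁, s₂, hst, h₁, h₂⟩
      refine ⟨e.toFun ⁻¹' s₁, e.toFun ⁻¹' s₂, ?_, ?_, ?_⟩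
      · rw [← Set.preimage_union, ← hst, Set.preimage_image_eq _ e.injective]
      · rwa [← ihφ, e.image_preimage_of_subset_image (hst ▸ Set.subset_union_left)]
      · rwa [← ihψ, e.image_preimage_of_subset_image (hst ▸ Set.subset_union_right)]
    · rintro ⟨t₁, t₂, rfl, h₁, h₂⟩
      exact ⟨_, _, Set.image_union _ _ _, (ihφ t₁).mpr h₁, (ihψ t₂).mpr h₂⟩
  | impl φ ψ ihφ ihψ =>
    constructor
    · intro h s hs hφ
      rw [← ihψ]
      exact h _ (e.upset_image t ▸ Set.image_mono hs) ((ihφ s).mpr hφ)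
    · intro h s hs hφ
      rw [e.upset_image] at hs
      rw [← e.image_preimage_of_subset_image hs, ihφ] at hφ
      rw [← e.image_preimage_of_subset_image hs, ihψ]
      refine h _ ?_ hφ
      rw [← Set.preimage_image_eq (M.upset t) e.injective]
      exact Set.preimage_mono hs
  | iorr φ ψ ihφ ihψ => exact or_congr (ihφ t) (ihψ t)

end Embedding

def sum (M₁ M₂ : KripkeModel P) : KripkeModel P where
  W := M₁.W ⊕ M₂.W
  R := Sum.LiftRel M₁.R M₂.R
  refl
    | .inl a => .inl (M₁.refl a)
    | .inr a => .inr (M₂.refl a)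
  antisymm
    | _, _, .inl h, .inl h' => congrArg _ (M₁.antisymm _ _ h h')
    | _, _, .inr h, .inr h' => congrArg _ (M₂.antisymm _ _ h h')
  trans
    | _, _, _, .inl h, .inl h' => .inl (M₁.trans _ _ _ h h')
    | _, _, _, .inr h, .inr h' => .inr (M₂.trans _ _ _ h h')
  V := Sum.elim M₁.V M₂.V
  persistent
    | _, _, p, .inl h => M₁.persistent _ _ p h
    | _, _, p, .inr h => M₂.persistent _ _ p h

def inlEmbedding (M₁ M₂ : KripkeModel P) : Embedding M₁ (M₁.sum M₂) where
  toFun := Sum.inl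
  rel_iff _ _ := Sum.liftRel_inl_inl
  exists_eq_of_rel
    | _, _, .inl _ => ⟨_, rfl⟩
  val_iff _ _ := Iff.rfl

def inrEmbedding (M₁ M₂ : KripkeModel P) : Embedding M₂ (M₁.sum M₂) where
  toFun := Sum.inr
  rel_iff _ _ := Sum.liftRel_inr_inr
  exists_eq_of_rel
    | _, _, .inr _ => ⟨_, rfl⟩
  val_iff _ _ := Iff.rfl

end KripkeModel

end

/-- split property for inquisitive disjunction: if Γ consists of
truth-conditional formulas and Γ ⊨ φ ⩾ ψ, then Γ ⊨ φ or Γ ⊨ ψ. -/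
theorem split_property {P : Type} (Γ : Set (Formula P))
    (hΓ : ∀ γ ∈ Γ, truthConditional γ) (φ ψ : Formula P)
    (h : ∀ (M : KripkeModel P) (t : Set M.W),
        (∀ γ ∈ Γ, support M γ t) → support M (Formula.iorr φ ψ) t) :
    (∀ (M : KripkeModel P) (t : Set M.W),
        (∀ γ ∈ Γ, support M γ t) → support M φ t) ∨
    (∀ (M : KripkeModel P) (t : Set M.W),
        (∀ γ ∈ Γ, support M γ t) → support M ψ t) := by
  by_contra! ⟨⟨M₁, t₁, hΓ₁, hφ₁⟩, ⟨M₂, t₂, hΓ₂, hψ₂⟩⟩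
  let e₁ := KripkeModel.inlEmbedding M₁ M₂
  let e₂ := KripkeModel.inrEmbedding M₁ M₂
  have hΓ_union : ∀ γ ∈ Γ, support (M₁.sum M₂) γ (e₁.toFun '' t₁ ∪ e₂.toFun '' t₂) :=
    fun γ hγ => (hΓ γ hγ).support_union
      ((e₁.support_image γ t₁).mpr (hΓ₁ γ hγ)) ((e₂.support_image γ t₂).mpr (hΓ₂ γ hγ))
  rcases h _ _ hΓ_union with hφ | hψ
  · exact hφ₁ ((e₁.support_image φ t₁).mp (support_antitone φ Set.subset_union_left hφ))
  · exact hψ₂ ((e₂.support_image ψ t₂).mp (support_antitone ψ Set.subset_union_right hψ))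
end

section
/- Finite model property: if a formula φ of L is not valid in InqI (i.e., there exist an intuitionistic Kripke model M and a team t with M,t ⊭ φ), then there exist a finite intuitionistic Kripke model M' (with finite set of worlds) and a finite team t' such that M',t' ⊭ φ. -/
namespace Formula

variable {P : Type}

def subformulas : Formula P → Set (Formula P)
  | atom p => {atom p}
  | bot => {bot}
  | and a b => insert (and a b) (a.subformulas ∪ b.subformulas)
  | or a b => insert (or a b) (a.subformulas ∪ b.subformulas)
  | impl a b => insert (impl a b) (a.subformulas ∪ b.subformulas)
  | iorr a b => insert (iorr a b) (a.subformulas ∪ b.subformulas)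

theorem mem_subformulas_self (φ : Formula P) : φ ∈ φ.subformulas := by
  cases φ <;> simp [subformulas]

theorem subformulas_finite (φ : Formula P) : φ.subformulas.Finite := by
  induction φ with
  | atom p => exact Set.finite_singleton _
  | bot => exact Set.finite_singleton _
  | and a b iha ihb | or a b iha ihb | impl a b iha ihb | iorr a b iha ihb =>
    exact (iha.union ihb).insert _

/-- `implResolutions as bs` lists the formulas `⋀_{α ∈ as} (α → f α)` for all choices
`f : as → bs`. -/
def implResolutions : List (Formula P) → List (Formula P) → List (Formula P)
  | [], _ => [bot.neg]
  | α :: as, bs => bs.flatMap fun β => (implResolutions as bs).map (and (impl α β))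

def resolutions : Formula P → List (Formula P)
  | atom p => [atom p]
  | bot => [bot]
  | and a b => a.resolutions.flatMap fun α => b.resolutions.map (and α)
  | or a b => a.resolutions.flatMap fun α => b.resolutions.map (or α)
  | impl a b => implResolutions a.resolutions b.resolutions
  | iorr a b => a.resolutions ++ b.resolutions

theorem standard_of_mem_implResolutions {as bs : List (Formula P)}
    (has : ∀ α ∈ as, α.standard) (hbs : ∀ β ∈ bs, β.standard) :
    ∀ γ ∈ implResolutions as bs, γ.standard := by
  induction as with
  | nil => simp [implResolutions, neg, standard]
  | cons α as ih =>
    simp only [implResolutions, List.mem_flatMap, List.mem_map]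
    rintro _ ⟨β, hβ, γ, hγ, rfl⟩
    exact ⟨⟨has α List.mem_cons_self, hbs β hβ⟩,
      ih (fun α' hα' => has α' (List.mem_cons_of_mem α hα')) γ hγ⟩

theorem standard_of_mem_resolutions {φ : Formula P} : ∀ α ∈ φ.resolutions, α.standard := by
  induction φ with
  | atom p => simp [resolutions, standard]
  | bot => simp [resolutions, standard]
  | and a b iha ihb | or a b iha ihb =>
    simp only [resolutions, List.mem_flatMap, List.mem_map]
    rintro _ ⟨α, hα, β, hβ, rfl⟩
    exact ⟨iha α hα, ihb β hβ⟩
  | impl a b iha ihb => exact standard_of_mem_implResolutions iha ihb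
  | iorr a b iha ihb =>
    simp only [resolutions, List.mem_append]
    rintro α (hα | hα)
    exacts [iha α hα, ihb α hα]

end Formula

namespace KripkeModel

open Formula

variable {P : Type} (M : KripkeModel P)

def forces : M.W → Formula P → Prop
  | w, .atom p => M.V w p
  | _, .bot => False
  | w, .and a b => forces w a ∧ forces w b
  | w, .or a b => forces w a ∨ forces w b
  | w, .impl a b => ∀ v, M.R w v → forces v a → forces v b
  | w, .iorr a b => forces w a ∨ forces w b

variable {M}

theorem forces_of_R {w v : M.W} (hwv : M.R w v) {φ : Formula P} :
    M.forces w φ → M.forces v φ := by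
  induction φ with
  | atom p => exact M.persistent w v p hwv
  | bot => exact id
  | and a b iha ihb => exact And.imp iha ihb
  | or a b iha ihb | iorr a b iha ihb => exact Or.imp iha ihb
  | impl a b => exact fun h u hvu => h u (M.trans w v u hwv hvu)

theorem support_iff_forall_forces {φ : Formula P} (hφ : φ.standard) (t : Set M.W) :
    support M φ t ↔ ∀ w ∈ t, M.forces w φ := by
  induction φ generalizing t with
  | atom p => rfl
  | bot => exact Set.eq_empty_iff_forall_notMem
  | and a b iha ihb =>
    simp only [support, forces, iha hφ.1, ihb hφ.2]
    exact forall₂_and.symm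
  | or a b iha ihb =>
    constructor
    · rintro ⟨t₁, t₂, rfl, h₁, h₂⟩ w (hw | hw)
      exacts [.inl ((iha hφ.1 t₁).1 h₁ w hw), .inr ((ihb hφ.2 t₂).1 h₂ w hw)]
    · intro h
      refine ⟨{w ∈ t | M.forces w a}, {w ∈ t | M.forces w b}, ?_,
        (iha hφ.1 _).2 fun w hw => hw.2, (ihb hφ.2 _).2 fun w hw => hw.2⟩
      rw [← Set.sep_or]
      exact (Set.sep_eq_self_iff_mem_true.2 h).symm
  | impl a b iha ihb =>
    constructor
    · intro h w hw v hwv hav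
      have hv : ({v} : Set M.W) ⊆ M.upset t := Set.singleton_subset_iff.2 ⟨w, hw, hwv⟩
      exact (ihb hφ.2 _).1 (h {v} hv ((iha hφ.1 _).2 fun _ hu => hu ▸ hav)) v rfl
    · intro h t' ht' ha
      refine (ihb hφ.2 t').2 fun v hv => ?_
      obtain ⟨w, hw, hwv⟩ := ht' hv
      exact h w hw v hwv ((iha hφ.1 t').1 ha v hv)
  | iorr => exact hφ.elim

theorem exists_mem_implResolutions_support_iff (t : Set M.W) (as bs : List (Formula P)) :
    (∃ γ ∈ implResolutions as bs, support M γ t) ↔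
      ∀ α ∈ as, ∃ β ∈ bs, support M (.impl α β) t := by
  induction as with
  | nil => simp [implResolutions, support, Formula.neg]
  | cons α as ih =>
    simp only [implResolutions, List.mem_flatMap, List.mem_map, List.forall_mem_cons, ← ih]
    constructor
    · rintro ⟨_, ⟨β, hβ, γ, hγ, rfl⟩, hαβ, hsγ⟩
      exact ⟨⟨β, hβ, hαβ⟩, γ, hγ, hsγ⟩
    · rintro ⟨⟨β, hβ, hαβ⟩, γ, hγ, hsγ⟩
      exact ⟨_, ⟨β, hβ, γ, hγ, rfl⟩, hαβ, hsγ⟩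

theorem support_impl_iff_of_resolutions {a b : Formula P} (t : Set M.W)
    (iha : ∀ s, support M a s ↔ ∃ α ∈ a.resolutions, support M α s)
    (ihb : ∀ s, support M b s ↔ ∃ β ∈ b.resolutions, support M β s) :
    support M (.impl a b) t ↔
      ∀ α ∈ a.resolutions, ∃ β ∈ b.resolutions, support M (.impl α β) t := by
  constructor
  · intro h α hα
    have hαs := standard_of_mem_resolutions α hα
    -- the largest subteam of `R[t]` supporting the truth-conditional `α`
    set s := {v ∈ M.upset t | M.forces v α}
    have hsα : support M α s := (support_iff_forall_forces hαs s).2 fun _ hv => hv.2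
    have hsb : support M b s := h s (Set.sep_subset _ _) ((iha s).2 ⟨α, hα, hsα⟩)
    obtain ⟨β, hβ, hsβ⟩ := (ihb s).1 hsb
    refine ⟨β, hβ, fun t' ht' hα' => ?_⟩
    rw [support_iff_forall_forces (standard_of_mem_resolutions β hβ)] at hsβ ⊢
    rw [support_iff_forall_forces hαs] at hα'
    exact fun v hv => hsβ v ⟨ht' hv, hα' v hv⟩
  · intro h t' ht' ha
    obtain ⟨α, hα, hsα⟩ := (iha t').1 ha
    obtain ⟨β, hβ, hαβ⟩ := h α hα
    exact (ihb t').2 ⟨β, hβ, hαβ t' ht' hsα⟩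

theorem support_iff_exists_resolution (φ : Formula P) (t : Set M.W) :
    support M φ t ↔ ∃ α ∈ φ.resolutions, support M α t := by
  induction φ generalizing t with
  | atom p | bot => simp [resolutions]
  | and a b iha ihb =>
    simp only [support, resolutions, List.mem_flatMap, List.mem_map, iha, ihb]
    constructor
    · rintro ⟨⟨α, hα, hsα⟩, β, hβ, hsβ⟩
      exact ⟨_, ⟨α, hα, β, hβ, rfl⟩, hsα, hsβ⟩
    · rintro ⟨_, ⟨α, hα, β, hβ, rfl⟩, hsα, hsβ⟩
      exact ⟨⟨α, hα, hsα⟩, β, hβ, hsβ⟩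
  | or a b iha ihb =>
    simp only [support, resolutions, List.mem_flatMap, List.mem_map, iha, ihb]
    constructor
    · rintro ⟨t₁, t₂, rfl, ⟨α, hα, hsα⟩, β, hβ, hsβ⟩
      exact ⟨_, ⟨α, hα, β, hβ, rfl⟩, t₁, t₂, rfl, hsα, hsβ⟩
    · rintro ⟨_, ⟨α, hα, β, hβ, rfl⟩, t₁, t₂, rfl, hsα, hsβ⟩
      exact ⟨t₁, t₂, rfl, ⟨α, hα, hsα⟩, β, hβ, hsβ⟩
  | impl a b iha ihb =>
    rw [support_impl_iff_of_resolutions t iha ihb, resolutions,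
      exists_mem_implResolutions_support_iff]
  | iorr a b iha ihb =>
    simp only [support, resolutions, List.mem_append, iha, ihb]
    constructor
    · rintro (⟨α, hα, hs⟩ | ⟨α, hα, hs⟩)
      exacts [⟨α, .inl hα, hs⟩, ⟨α, .inr hα, hs⟩]
    · rintro ⟨α, hα | hα, hs⟩
      exacts [.inl ⟨α, hα, hs⟩, .inr ⟨α, hα, hs⟩]

variable (M)

def theoryIn (L : Set (Formula P)) (w : M.W) : Set (Formula P) :=
  {ψ ∈ L | M.forces w ψ}

def filtration (L : Set (Formula P)) : KripkeModel P where
  W := Set.range (M.theoryIn L)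
  R s s' := s.1 ⊆ s'.1
  refl _ := subset_rfl
  antisymm _ _ h h' := Subtype.ext (h.antisymm h')
  trans _ _ _ h h' := h.trans h'
  V s p := .atom p ∈ s.1
  persistent _ _ _ h hp := h hp

def toFiltration (L : Set (Formula P)) (w : M.W) : (M.filtration L).W :=
  ⟨M.theoryIn L w, w, rfl⟩

variable {M}

theorem finite_filtration {L : Set (Formula P)} (hL : L.Finite) : Finite (M.filtration L).W :=
  (hL.finite_subsets.subset (Set.range_subset_iff.2 fun _ => Set.sep_subset _ _)).to_subtype

theorem forces_toFiltration_iff {L : Set (Formula P)} {φ : Formula P}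
    (hφ : φ.subformulas ⊆ L) (w : M.W) :
    (M.filtration L).forces (M.toFiltration L w) φ ↔ M.forces w φ := by
  induction φ generalizing w with
  | atom p => exact and_iff_right (hφ rfl)
  | bot => rfl
  | and a b iha ihb =>
    exact and_congr (iha (fun _ h => hφ (.inr (.inl h))) w)
      (ihb (fun _ h => hφ (.inr (.inr h))) w)
  | or a b iha ihb | iorr a b iha ihb =>
    exact or_congr (iha (fun _ h => hφ (.inr (.inl h))) w)
      (ihb (fun _ h => hφ (.inr (.inr h))) w)
  | impl a b iha ihb =>
    have iha := iha (fun _ h => hφ (.inr (.inl h)))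
    have ihb := ihb (fun _ h => hφ (.inr (.inr h)))
    constructor
    · intro h v hwv hav
      have hR : (M.filtration L).R (M.toFiltration L w) (M.toFiltration L v) :=
        fun _ hψ => ⟨hψ.1, forces_of_R hwv hψ.2⟩
      exact (ihb v).1 (h _ hR ((iha v).2 hav))
    · rintro h ⟨_, v, rfl⟩ hwv hav
      have himp : M.forces v (.impl a b) := (hwv ⟨hφ (mem_subformulas_self _), h⟩).2
      exact (ihb v).2 (himp v (M.refl v) ((iha v).1 hav))

theorem support_toFiltration_image_iff {L : Set (Formula P)} {φ : Formula P}
    (hstd : φ.standard) (hφ : φ.subformulas ⊆ L) (t : Set M.W) :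
    support (M.filtration L) φ (M.toFiltration L '' t) ↔ support M φ t := by
  simp only [support_iff_forall_forces hstd, Set.forall_mem_image, forces_toFiltration_iff hφ]

end KripkeModel

/-- finite model property: a formula falsifiable at some team of some
model is falsifiable at a finite team of a finite model. -/
theorem finite_model_property {P : Type} (φ : Formula P)
    (h : ∃ (M : KripkeModel P) (t : Set M.W), ¬ support M φ t) :
    ∃ (M' : KripkeModel P) (t' : Set M'.W),
      Finite M'.W ∧ t'.Finite ∧ ¬ support M' φ t' := by
  obtain ⟨M, t, hφ⟩ := h
  set L := ⋃ α ∈ φ.resolutions, α.subformulas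
  have hL : L.Finite := (List.finite_toSet _).biUnion fun α _ => α.subformulas_finite
  have hfin : Finite (M.filtration L).W := KripkeModel.finite_filtration hL
  refine ⟨M.filtration L, M.toFiltration L '' t, hfin, Set.toFinite _, fun hsupp => hφ ?_⟩
  obtain ⟨α, hα, hsα⟩ := (KripkeModel.support_iff_exists_resolution φ _).1 hsupp
  have hαL : α.subformulas ⊆ L := Set.subset_biUnion_of_mem (u := Formula.subformulas) hα
  have hαstd := Formula.standard_of_mem_resolutions α hα
  exact (KripkeModel.support_iff_exists_resolution φ t).2
    ⟨α, hα, (KripkeModel.support_toFiltration_image_iff hαstd hαL t).1 hsα⟩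
end
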